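/- Let Π.φ be a QCNF and let l_e be an existential literal and l_u a universal literal with l_e < l_u such that l_e and l_u lie in the same strongly connected component of the binary implication graph G_φ (i.e. G_φ has a path from l_e to l_u and a path from l_u to l_e). Then Π.φ has a QU-resolution refutation. -/

import Mathlib

/-!
Framework for prenex QCNF: variables are natural numbers; a quantifier prefix is
given by `ex : Var → Bool` (`ex v = true` iff variable `v` is existential), and
the prefix order on variables (hence on literals) is `<` on ℕ.
-/

abbrev Var := ℕ

/-- A literal: a variable together with a polarity (`pos = true` for `x`, `false` for `x̄`). -/
structure Lit where
  var : Var
  pos : Bool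
deriving DecidableEq

/-- The complementary literal. -/
def Lit.neg (l : Lit) : Lit := ⟨l.var, !l.pos⟩

/-- Clauses (disjunctions) and terms (conjunctions) are finite sets of literals. -/
abbrev Clause := Finset Lit
abbrev Term := Finset Lit

/-- A set of literals contains no complementary pair. -/
def LitSetOk (C : Finset Lit) : Prop := ∀ l ∈ C, l.neg ∉ C

instance (C : Finset Lit) : Decidable (LitSetOk C) :=
  inferInstanceAs (Decidable (∀ l ∈ C, l.neg ∉ C))

/-- The resOf on pivot literal `p` (used both for clauses and for terms). -/
def resOf (p : Lit) (A B : Finset Lit) : Finset Lit := A.erase p ∪ B.erase p.neg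

/-- Resolution of `A` (containing `p`) with `B` (containing `p.neg`) is defined: the
union of the side literals contains no complementary pair and neither `p` nor `p.neg`. -/
def ResOk (p : Lit) (A B : Finset Lit) : Prop :=
  p ∈ A ∧ p.neg ∈ B ∧ p ∉ resOf p A B ∧ p.neg ∉ resOf p A B ∧
    LitSetOk (resOf p A B)

instance (p : Lit) (A B : Finset Lit) : Decidable (ResOk p A B) :=
  inferInstanceAs (Decidable (p ∈ A ∧ p.neg ∈ B ∧ p ∉ resOf p A B ∧
    p.neg ∉ resOf p A B ∧ LitSetOk (resOf p A B)))

/-- ∀-reduction: `C'` results from `C` by removing every universal literal `l` such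
that no existential literal `k ∈ C` satisfies `l < k`. -/
def IsForallReduct (ex : Var → Bool) (C C' : Clause) : Prop :=
  ∀ l : Lit, l ∈ C' ↔ l ∈ C ∧ (ex l.var = true ∨ ∃ k ∈ C, ex k.var = true ∧ l.var < k.var)

/-- QU-resolution proofs of a clause from the matrix `φ` under the prefix `ex`:
every clause is in `φ`, or a QU-resOf of two earlier clauses (the pivot may be
universal), or results from an earlier clause by ∀-reduction. -/
inductive QUProof (ex : Var → Bool) (φ : Finset Clause) : Clause → Prop
  | ax {C : Clause} : C ∈ φ → QUProof ex φ C
  | res {A B : Clause} {p : Lit} : QUProof ex φ A → QUProof ex φ B → ResOk p A B →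
      QUProof ex φ (resOf p A B)
  | red {C C' : Clause} : QUProof ex φ C → IsForallReduct ex C C' → QUProof ex φ C'

/-- ∃-reduction: `T'` results from `T` by removing every existential literal `l` such
that no universal literal `k ∈ T` satisfies `l < k`. -/
def IsExistsReduct (ex : Var → Bool) (T T' : Term) : Prop :=
  ∀ l : Lit, l ∈ T' ↔ l ∈ T ∧ (ex l.var = false ∨ ∃ k ∈ T, ex k.var = false ∧ l.var < k.var)

/-- Model generation rule: `T` is generated from the matrix `φ` if every clause of `φ`
contains a literal belonging to `T`. -/
def ModelGen (φ : Finset Clause) (T : Term) : Prop := ∀ C ∈ φ, ∃ l ∈ C, l ∈ T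

/-- `π` is a term-resolution proof of the term `T` from the QCNF with prefix `ex` and
matrix `φ`: a finite sequence of terms ending in `T`, each generated by model
generation or obtained from earlier terms by ∃-reduction or term-resolution. -/
def IsTermResProof (ex : Var → Bool) (φ : Finset Clause) (π : List Term) (T : Term) : Prop :=
  π ≠ [] ∧ π.getLast? = some T ∧
    ∀ i : Fin π.length, LitSetOk (π.get i) ∧
      (ModelGen φ (π.get i) ∨
        (∃ j : Fin π.length, j < i ∧ IsExistsReduct ex (π.get j) (π.get i)) ∨
        (∃ j k : Fin π.length, j < i ∧ k < i ∧ ∃ p : Lit,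
          ResOk p (π.get j) (π.get k) ∧ π.get i = resOf p (π.get j) (π.get k)))

/-- Value of a literal under a total assignment. -/
def evalLit (σ : Var → Bool) (l : Lit) : Bool := if l.pos then σ l.var else !σ l.var

/-- A strategy assigns to each (existential) variable a Boolean function of the
universal assignment — the semantic counterpart of a propositional formula. -/
abbrev Strategy := Var → (Var → Bool) → Bool

/-- The total assignment induced by a strategy `M` and a universal assignment `τ`. -/
def Strategy.assign (ex : Var → Bool) (M : Strategy) (τ : Var → Bool) : Var → Bool :=
  fun v => if ex v then M v τ else τ v

/-- The definition of each existential variable depends only on the universal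
variables preceding it in the prefix. -/
def WellFormed (ex : Var → Bool) (M : Strategy) : Prop :=
  ∀ e, ex e = true → ∀ τ τ' : Var → Bool,
    (∀ u, ex u = false → u < e → τ u = τ' u) → M e τ = M e τ'

/-- `M` is a model of the QCNF with prefix `ex` and matrix `φ`: it is a well-formed
strategy and `M(φ)` is a tautology. -/
def IsModel (ex : Var → Bool) (φ : Finset Clause) (M : Strategy) : Prop :=
  WellFormed ex M ∧
    ∀ τ : Var → Bool, ∀ C ∈ φ, ∃ l ∈ C, evalLit (Strategy.assign ex M τ) l = true

/-- A term `T` agrees with an assignment `τ` to the universal variables iff there is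
no (universal) literal `l` with `l̄ ∈ T` and `τ(l) = 1`. -/
def Agrees (ex : Var → Bool) (τ : Var → Bool) (T : Term) : Prop :=
  ¬∃ l : Lit, ex l.var = false ∧ l.neg ∈ T ∧ evalLit τ l = true

/-- Edge `a → b` of the binary implication graph of `φ`: the binary clause
`a.neg ∨ b` is in `φ` (a clause `l₁ ∨ l₂` yields the edges `l̄₁ → l₂`, `l̄₂ → l₁`). -/
def ImpEdge (φ : Finset Clause) (a b : Lit) : Prop :=
  a ≠ b ∧ a.neg ≠ b ∧ ({a.neg, b} : Clause) ∈ φ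

/-- The existential literal `l` of the clause `C` is blocked in the matrix `φ`. -/
def BlockedIn (ex : Var → Bool) (φ : Finset Clause) (C : Clause) (l : Lit) : Prop :=
  ex l.var = true ∧ l ∈ C ∧ ∀ D ∈ φ, l.neg ∈ D → ∃ k ∈ C, k.var < l.var ∧ k.neg ∈ D

/-- One step of blocked clause elimination: remove one blocked clause. -/
def BCEStep (ex : Var → Bool) (φ φ' : Finset Clause) : Prop :=
  ∃ C ∈ φ, (∃ l, BlockedIn ex φ C l) ∧ φ' = φ.erase C

/-- The side-condition for eliminating the existential variable `x` from the matrix `φ`. -/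
def VEside (x : Var) (φ : Finset Clause) : Prop :=
  ∀ C ∈ φ, (⟨x, true⟩ : Lit) ∈ C → (∃ k ∈ C, x < k.var) →
    ∀ D ∈ φ, (⟨x, false⟩ : Lit) ∈ D → ∃ z ∈ C, z.var < x ∧ z.neg ∈ D

/-- The set of all defined resolvents on `x` between the clauses of `φ` containing the
literal `x` and those containing `x̄`. -/
def VEresolvents (x : Var) (φ : Finset Clause) : Finset Clause :=
  ((φ ×ˢ φ).filter fun q => ResOk ⟨x, true⟩ q.1 q.2).image
    fun q => resOf ⟨x, true⟩ q.1 q.2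

/-- Variable elimination of `x`: replace all clauses mentioning `x` by all defined
resolvents on `x`. -/
def VEapply (x : Var) (φ : Finset Clause) : Finset Clause :=
  φ.filter (fun C => (⟨x, true⟩ : Lit) ∉ C ∧ (⟨x, false⟩ : Lit) ∉ C) ∪ VEresolvents x φ

/-- The variables of Φₙ (0-indexed): `uᵢ` is variable `2*i`, `eᵢ` is variable `2*i+1`,
so the prefix `∀u₀∃e₀…∀u_{n-1}∃e_{n-1}` is the natural order. -/
def uLit (i : ℕ) (b : Bool) : Lit := ⟨2 * i, b⟩
def eLit (i : ℕ) (b : Bool) : Lit := ⟨2 * i + 1, b⟩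

/-- The prefix of Φₙ: even variables universal, odd variables existential. -/
def phiEx : Var → Bool := fun v => v % 2 == 1

/-- The clause `ūᵢ ∨ eᵢ`. -/
def posClause (i : ℕ) : Clause := {uLit i false, eLit i true}
/-- The clause `uᵢ ∨ ēᵢ`. -/
def negClause (i : ℕ) : Clause := {uLit i true, eLit i false}

/-- The matrix of Φₙ: `⋀_{i<n} (ūᵢ ∨ eᵢ) ∧ (uᵢ ∨ ēᵢ)`. -/
def PhiMatrix (n : ℕ) : Finset Clause :=
  (Finset.range n).biUnion fun i => {posClause i, negClause i}

/-- The set `W` of witnesses for the literal `l` being blocked in the clause `C`. -/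
def witnesses (φ : Finset Clause) (C : Clause) (l : Lit) : Finset Lit :=
  C.filter fun k => k ≠ l ∧ k.var < l.var ∧ ∃ D ∈ φ, k.neg ∈ D ∧ l.neg ∈ D

/-- `φ` with all literals not less than `x` deleted from each clause. -/
def restrictBelow (x : Var) (φ : Finset Clause) : Finset Clause :=
  φ.image fun C => C.filter fun l => l.var < x

/-!
A path `a → … → b` in the implication graph yields, by chaining QU-resolutions of its binary
clauses, a derivation of `ā ∨ b` or of `b` alone. The two paths between `l_e` and `l_u` thus give
clauses `l̄_e ∨ l_u` and `l̄_u ∨ l_e` (or their sub-clauses containing `l_u`, resp. `l_e`). Since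
`l_e < l_u`, ∀-reduction removes the universal literal from both, leaving the units `l̄_e` (or the
empty clause) and `l_e`, which resolve to the empty clause.
-/

namespace Lit

@[simp] lemma neg_neg (l : Lit) : l.neg.neg = l := by
  cases l; simp [Lit.neg]

lemma neg_ne (l : Lit) : l.neg ≠ l := by
  cases l; simp [Lit.neg]

end Lit

lemma LitSetOk.mono {C D : Finset Lit} (hD : LitSetOk D) (hCD : C ⊆ D) : LitSetOk C :=
  fun l hl hnl => hD l (hCD hl) (hCD hnl)

lemma litSetOk_pair {x y : Lit} (hxy : y ≠ x.neg) : LitSetOk {x, y} := by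
  intro l hl hnl
  simp only [Finset.mem_insert, Finset.mem_singleton] at hl hnl
  rcases hl with rfl | rfl <;> rcases hnl with h | h
  · exact l.neg_ne h
  · exact hxy h.symm
  · exact hxy (by rw [← h, Lit.neg_neg])
  · exact l.neg_ne h

section QUProof

variable {ex : Var → Bool} {φ : Finset Clause}

/-- `D` is `ā ∨ b`, or just `b` once the path has passed through `ā`. -/
def QUImplies (ex : Var → Bool) (φ : Finset Clause) (a b : Lit) : Prop :=
  ∃ D : Clause, QUProof ex φ D ∧ b ∈ D ∧ D ⊆ {a.neg, b}

lemma QUImplies.of_impEdge {a b : Lit} (h : ImpEdge φ a b) : QUImplies ex φ a b :=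
  ⟨_, .ax h.2.2, by simp, le_rfl⟩

lemma QUImplies.trans_impEdge {a b c : Lit} (hab : QUImplies ex φ a b) (hne : a ≠ b)
    (hbc : ImpEdge φ b c) (hca : c ≠ a) : QUImplies ex φ a c := by
  obtain ⟨D, hD, hbD, hDsub⟩ := hab
  obtain ⟨hbc, hbc', hE⟩ := hbc
  have hmem : ∀ l, l ∈ resOf b D {b.neg, c} ↔ (l ∈ D ∧ l ≠ b) ∨ l = c := by
    intro l
    simp only [resOf, Finset.mem_union, Finset.mem_erase, Finset.mem_insert,
      Finset.mem_singleton]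
    grind [Lit.neg_neg]
  have hsub : resOf b D {b.neg, c} ⊆ {a.neg, c} := by
    intro l hl
    have hD := @hDsub l
    simp only [Finset.mem_insert, Finset.mem_singleton] at hD ⊢
    grind
  have hbnD : b.neg ∉ D := fun h => by
    have h' := hDsub h
    simp only [Finset.mem_insert, Finset.mem_singleton] at h'
    rcases h' with h' | h'
    · exact hne (by simpa using congrArg Lit.neg h'.symm)
    · exact b.neg_ne h'
  have hok : ResOk b D {b.neg, c} :=
    ⟨hbD, by simp, by grind, by grind, (litSetOk_pair (by simpa using hca)).mono hsub⟩
  exact ⟨_, .res hD (.ax hE) hok, (hmem c).2 (Or.inr rfl), hsub⟩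

lemma QUImplies.of_reflTransGen {a b : Lit} (h : Relation.ReflTransGen (ImpEdge φ) a b) :
    a = b ∨ QUImplies ex φ a b := by
  induction h with
  | refl => exact .inl rfl
  | @tail b c _ hbc ih =>
    by_cases hab : a = b
    · subst hab
      exact .inr (.of_impEdge hbc)
    by_cases hca : c = a
    · exact .inl hca.symm
    exact .inr ((ih.resolve_left hab).trans_impEdge hab hbc hca)

lemma QUProof.forallReduce_pair {D : Clause} {u e : Lit} (hD : QUProof ex φ D)
    (hsub : D ⊆ {u, e}) (hu : ex u.var = false) (he : ex e.var = true) (heu : e.var < u.var) :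
    QUProof ex φ (D ∩ {e}) := by
  refine hD.red fun l => ?_
  have hl := @hsub l
  simp only [Finset.mem_inter, Finset.mem_insert, Finset.mem_singleton] at hl ⊢
  constructor
  · rintro ⟨hlD, rfl⟩
    exact ⟨hlD, .inl he⟩
  · rintro ⟨hlD, hex | ⟨k, hkD, hk, hlk⟩⟩
    · grind
    · have hk' := hsub hkD
      simp only [Finset.mem_insert, Finset.mem_singleton] at hk'
      grind

lemma QUProof.empty_of_unit {l : Lit} {C : Clause} (hl : QUProof ex φ {l})
    (hC : QUProof ex φ C) (hCsub : C ⊆ {l.neg}) : QUProof ex φ ∅ := by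
  rcases Finset.subset_singleton_iff.1 hCsub with rfl | rfl
  · exact hC
  · have hres : resOf l {l} {l.neg} = ∅ := by simp [resOf]
    have hok : ResOk l {l} {l.neg} := by
      refine ⟨by simp, by simp, ?_, ?_, ?_⟩ <;> simp [hres, LitSetOk]
    simpa [hres] using hl.res hC hok

end QUProof

theorem stmt16_general (ex : Var → Bool) (φ : Finset Clause)
    (le lu : Lit) (hle : ex le.var = true) (hlu : ex lu.var = false)
    (hlt : le.var < lu.var)
    (p1 : Relation.ReflTransGen (ImpEdge φ) le lu)
    (p2 : Relation.ReflTransGen (ImpEdge φ) lu le) :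
    QUProof ex φ ∅ := by
  have hne : le ≠ lu := fun h => hlt.ne (congrArg Lit.var h)
  obtain ⟨D₁, hD₁, -, hD₁sub⟩ := (QUImplies.of_reflTransGen (ex := ex) p1).resolve_left hne
  obtain ⟨D₂, hD₂, hleD₂, hD₂sub⟩ :=
    (QUImplies.of_reflTransGen (ex := ex) p2).resolve_left hne.symm
  have hC₁ : QUProof ex φ (D₁ ∩ {le.neg}) :=
    hD₁.forallReduce_pair (by rwa [Finset.pair_comm]) hlu hle hlt
  have hC₂ : QUProof ex φ {le} := by
    simpa [Finset.inter_singleton_of_mem hleD₂] using hD₂.forallReduce_pair hD₂sub hlu hle hlt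
  exact hC₂.empty_of_unit hC₁ Finset.inter_subset_right

theorem stmt16 (ex : Var → Bool) (φ : Finset Clause) (hok : ∀ C ∈ φ, LitSetOk C)
    (le lu : Lit) (hle : ex le.var = true) (hlu : ex lu.var = false)
    (hlt : le.var < lu.var)
    (p1 : Relation.ReflTransGen (ImpEdge φ) le lu)
    (p2 : Relation.ReflTransGen (ImpEdge φ) lu le) :
    QUProof ex φ ∅ :=
  stmt16_general ex φ le lu hle hlu hlt p1 p2
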